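/- Let $B$ be a $\mathbf{k}$-bialgebra, $b \in B$, and $m \geq -1$ an integer. Then $m$ is a degree-upper bound of $b$ (i.e., $(\eta\epsilon - \mathrm{id})^{\circledast n}(b) = 0$ for every nonnegative integer $n > m$) if and only if the sequence $(\mathrm{id}^{\circledast 0}(b), \mathrm{id}^{\circledast 1}(b), \mathrm{id}^{\circledast 2}(b), \ldots)$ of elements of $B$ is $m$-polynomial. -/

import Mathlib

open TensorProduct

variable (k : Type*) [CommRing k] (B : Type*) [Ring B] [Bialgebra k B]

/-- The convolution product `f ⊛ g = μ ∘ (f ⊗ g) ∘ Δ` on `k`-linear maps `B → B`. -/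
noncomputable def conv (f g : B →ₗ[k] B) : B →ₗ[k] B :=
  LinearMap.mul' k B ∘ₗ TensorProduct.map f g ∘ₗ Coalgebra.comul

/-- The unit `η ∘ ε` of the convolution algebra. -/
noncomputable def convOne : B →ₗ[k] B :=
  (Algebra.linearMap k B) ∘ₗ Coalgebra.counit

/-- Convolution powers: `f^{⊛ 0} = η ∘ ε` and `f^{⊛ (n+1)} = f^{⊛ n} ⊛ f`. -/
noncomputable def convPow : ℕ → (B →ₗ[k] B) → (B →ₗ[k] B)
  | 0, _ => convOne k B
  | n + 1, f => conv k B (convPow n f) f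

/-- A sequence `a : ℕ → A` in an abelian group is `m`-polynomial if
`∑_{i=0}^n (-1)^i C(n,i) • a i = 0` for every integer `n > m`. -/
def IsPolySeq {A : Type*} [AddCommGroup A] (m : ℤ) (a : ℕ → A) : Prop :=
  ∀ n : ℕ, m < (n : ℤ) →
    ∑ i ∈ Finset.range (n + 1), ((-1 : ℤ) ^ i * (n.choose i : ℤ)) • a i = 0

open Coalgebra in
lemma conv_repr (f g : B →ₗ[k] B) {b : B} {ι : Type*} (r : Coalgebra.Repr k b ι) :
    conv k B f g b = ∑ i ∈ r.index, f (r.left i) * g (r.right i) := by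
  simp [conv, ← r.eq, map_sum]

open Coalgebra in
lemma conv_one_right (f : B →ₗ[k] B) : conv k B f (convOne k B) = f := by
  refine LinearMap.ext fun b => ?_
  rw [conv_repr k B f _ (ℛ k b)]
  have h := congrArg (TensorProduct.rid k B) (sum_map_tmul_counit_eq f b (repr := ℛ k b))
  simp only [map_sum, TensorProduct.rid_tmul, one_smul] at h
  rw [← h]
  simp [convOne, Algebra.smul_def, ← Algebra.commutes]

open Coalgebra in
lemma conv_one_left (g : B →ₗ[k] B) : conv k B (convOne k B) g = g := by
  refine LinearMap.ext fun b => ?_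
  rw [conv_repr k B _ g (ℛ k b)]
  have h := congrArg (TensorProduct.lid k B) (sum_counit_tmul_map_eq g b (repr := ℛ k b))
  simp only [map_sum, TensorProduct.lid_tmul, one_smul] at h
  rw [← h]
  simp [convOne, Algebra.smul_def]

open Coalgebra in
lemma conv_sub_right (f g h : B →ₗ[k] B) :
    conv k B f (g - h) = conv k B f g - conv k B f h := by
  refine LinearMap.ext fun b => ?_
  rw [LinearMap.sub_apply, conv_repr k B f _ (ℛ k b), conv_repr k B f g (ℛ k b),
    conv_repr k B f h (ℛ k b), ← Finset.sum_sub_distrib]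
  simp [mul_sub]

open Coalgebra in
lemma conv_sum_left {ι : Type*} (s : Finset ι) (F : ι → (B →ₗ[k] B)) (g : B →ₗ[k] B) :
    conv k B (∑ i ∈ s, F i) g = ∑ i ∈ s, conv k B (F i) g := by
  refine LinearMap.ext fun b => ?_
  rw [conv_repr k B _ g (ℛ k b), LinearMap.sum_apply]
  simp only [conv_repr k B _ g (ℛ k b), LinearMap.sum_apply, Finset.sum_mul]
  exact Finset.sum_comm

open Coalgebra in
lemma conv_zsmul_left (z : ℤ) (f g : B →ₗ[k] B) :
    conv k B (z • f) g = z • conv k B f g := by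
  refine LinearMap.ext fun b => ?_
  rw [conv_repr k B _ g (ℛ k b), LinearMap.smul_apply, conv_repr k B f g (ℛ k b),
    Finset.smul_sum]
  simp [smul_mul_assoc, mul_assoc]

lemma convPow_sub_key (n : ℕ) : convPow k B n (convOne k B - LinearMap.id) =
    ∑ i ∈ Finset.range (n + 1),
      ((-1 : ℤ) ^ i * (n.choose i : ℤ)) • convPow k B i LinearMap.id := by
  induction n with
  | zero => simp [convPow]
  | succ n ih =>
    set P : ℕ → (B →ₗ[k] B) := fun i => convPow k B i LinearMap.id with hP
    have step : convPow k B (n + 1) (convOne k B - LinearMap.id)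
        = ∑ i ∈ Finset.range (n + 1),
            ((-1 : ℤ) ^ i * (n.choose i : ℤ)) • (P i - P (i + 1)) := by
      show conv k B (convPow k B n (convOne k B - LinearMap.id)) _ = _
      rw [ih, conv_sum_left]
      refine Finset.sum_congr rfl fun i _ => ?_
      rw [conv_zsmul_left, conv_sub_right, conv_one_right]
      rfl
    rw [step]
    have hsplit : ∑ i ∈ Finset.range (n + 1),
        ((-1 : ℤ) ^ i * (n.choose i : ℤ)) • (P i - P (i + 1))
        = (∑ i ∈ Finset.range (n + 1), ((-1 : ℤ) ^ i * (n.choose i : ℤ)) • P i)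
          - ∑ i ∈ Finset.range (n + 1), ((-1 : ℤ) ^ i * (n.choose i : ℤ)) • P (i + 1) := by
      rw [← Finset.sum_sub_distrib]
      simp [smul_sub]
    rw [hsplit]
    rw [Finset.sum_range_succ' (fun i => ((-1 : ℤ) ^ i * (((n+1).choose i : ℕ) : ℤ)) • P i)
      (n + 1)]
    have hpascal : ∀ j, ((-1 : ℤ) ^ (j+1) * (((n+1).choose (j+1) : ℕ) : ℤ)) • P (j+1)
        = ((-1 : ℤ) ^ (j+1) * ((n.choose (j+1) : ℕ) : ℤ)) • P (j+1)
          - ((-1 : ℤ) ^ j * ((n.choose j : ℕ) : ℤ)) • P (j+1) := by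
      intro j
      rw [← sub_smul]
      congr 1
      rw [Nat.choose_succ_succ']
      push_cast
      ring
    rw [Finset.sum_congr rfl fun j _ => hpascal j, Finset.sum_sub_distrib]
    have hext : ∑ i ∈ Finset.range (n + 2), ((-1 : ℤ) ^ i * (n.choose i : ℤ)) • P i
        = ∑ i ∈ Finset.range (n + 1), ((-1 : ℤ) ^ i * (n.choose i : ℤ)) • P i := by
      rw [Finset.sum_range_succ, Nat.choose_succ_self]
      simp
    rw [Finset.sum_range_succ' (fun i => ((-1 : ℤ) ^ i * (n.choose i : ℤ)) • P i) (n + 1)]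
      at hext
    simp only [Nat.choose_zero_right, pow_zero, one_mul, Nat.cast_one, one_smul] at hext ⊢
    rw [← hext]; abel

/-- **Lemma.** Let `B` be a `k`-bialgebra, `b ∈ B` and `m ≥ -1` an integer.  Then `m` is a
degree-upper bound of `b` (i.e. `(ηε - id)^{⊛ n}(b) = 0` for all nonnegative `n > m`) if and
only if the sequence `(id^{⊛ n}(b))_{n ≥ 0}` is `m`-polynomial. -/
theorem stmt14 (b : B) (m : ℤ) (hm : -1 ≤ m) :
    (∀ n : ℕ, m < (n : ℤ) → convPow k B n (convOne k B - LinearMap.id) b = 0) ↔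
      IsPolySeq m (fun n => convPow k B n LinearMap.id b) := by
  have hkey : ∀ n : ℕ, convPow k B n (convOne k B - LinearMap.id) b
      = ∑ i ∈ Finset.range (n + 1),
          ((-1 : ℤ) ^ i * (n.choose i : ℤ)) • convPow k B i LinearMap.id b := by
    intro n
    rw [convPow_sub_key k B n]
    simp only [LinearMap.sum_apply, LinearMap.smul_apply]
  constructor
  · intro H n hn
    simpa only [← hkey n] using H n hn
  · intro H n hn
    rw [hkey n]
    simpa using H n hn
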